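/- arXiv:1611.09790 — 4 statements merged into one kernel-verified Lean document; each statement's English description precedes it below -/
import Mathlib

section
/- Let p ∈ ℕ, let Γ = {0,1}^p, let π : Γ → (0,∞), let S : Γ → (0,∞), and let ω : {0,1} × {1,…,p} → (0,1] be a weight function. Fix i* ∈ {1,…,p} and γ ∈ Γ, and set γ′ = tog(i*, γ). For η ∈ {0,1}^p with η_{i*} = 1, let N(γ, η) = {tog(j, γ) : η_j = 1} and T(γ, γ′; η) = S(γ′)/Σ_{j : η_j = 1} S(tog(j, γ)). Write ω_j = ω(γ_j, j) and ω̃_j = ω(γ′_j, j). Define the dMTM transition probability A(γ, γ′) = Σ over pairs (η, η′) ∈ {0,1}^p × {0,1}^p with η_{i*} = η′_{i*} = 1 of [∏_{j≠i*} ω_j^{η_j}(1−ω_j)^{1−η_j} ω̃_j^{η′_j}(1−ω̃_j)^{1−η′_j}] · ω_{i*} · T(γ, γ′; η) · min{1, π(γ′) ω̃_{i*} T(γ′, γ; η′)/(π(γ) ω_{i*} T(γ, γ′; η))}, and define A(γ′, γ) symmetrically with the roles of γ and γ′ exchanged. Then π(γ) A(γ, γ′) = π(γ′) A(γ′, γ).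 -/
/-- The toggle function: flip the `i`-th coordinate of `γ`. -/
def tog {p : ℕ} (i : Fin p) (γ : Fin p → Bool) : Fin p → Bool :=
  Function.update γ i (!(γ i))

/-- Bernoulli factor `q^b (1-q)^{1-b}` for `b ∈ {0,1}`. -/
def bern (q : ℝ) (b : Bool) : ℝ := if b then q else 1 - q

/-- Selection probability `T(γ, γ′; η) = S(γ′)/Σ_{j : η_j = 1} S(tog(j, γ))`. -/
noncomputable def Tsel {p : ℕ} (S : (Fin p → Bool) → ℝ)
    (γ γ' : Fin p → Bool) (η : Fin p → Bool) : ℝ :=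
  S γ' / ∑ j ∈ Finset.univ.filter (fun j => η j = true), S (tog j γ)

/-- The dMTM transition probability `A(γ, tog(i*, γ))`: the sum over pairs of inclusion
configurations `(η, η′)` with `η_{i*} = η′_{i*} = 1` of the product of the Bernoulli
probabilities (with forward weights `ω(γ_j, j)` and backward weights `ω(γ′_j, j)`), the
forward inclusion weight `ω_{i*}`, the selection probability `T(γ, γ′; η)`, and the
Metropolis-type acceptance probability. -/
noncomputable def AdMTM {p : ℕ} (pr S : (Fin p → Bool) → ℝ)
    (ω : Bool → Fin p → ℝ) (i : Fin p) (γ : Fin p → Bool) : ℝ :=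
  let γ' := tog i γ
  ∑ η : Fin p → Bool, ∑ η' : Fin p → Bool,
    if η i = true ∧ η' i = true then
      (∏ j ∈ Finset.univ.erase i, bern (ω (γ j) j) (η j) * bern (ω (γ' j) j) (η' j)) *
      (ω (γ i) i * Tsel S γ γ' η *
        min 1 (pr γ' * ω (γ' i) i * Tsel S γ' γ η' /
               (pr γ * ω (γ i) i * Tsel S γ γ' η)))
    else 0

lemma tog_tog {p : ℕ} (i : Fin p) (γ : Fin p → Bool) : tog i (tog i γ) = γ := by
  funext j
  by_cases hj : j = i
  · subst hj; simp [tog]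
  · simp [tog, Function.update_of_ne hj]

lemma Tsel_pos {p : ℕ} (S : (Fin p → Bool) → ℝ) (hS : ∀ γ, 0 < S γ)
    (i : Fin p) (γ γ' η : Fin p → Bool) (h : η i = true) :
    0 < Tsel S γ γ' η := by
  apply div_pos (hS γ')
  apply Finset.sum_pos (fun j _ => hS _)
  exact ⟨i, by simp [h]⟩

lemma min_helper {a b : ℝ} (ha : 0 < a) (hb : 0 < b) :
    a * min 1 (b / a) = b * min 1 (a / b) := by
  rw [mul_min_of_nonneg _ _ ha.le, mul_min_of_nonneg _ _ hb.le, mul_one, mul_one,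
    mul_div_cancel₀ _ ha.ne', mul_div_cancel₀ _ hb.ne', min_comm]

/-- Lemma 3.2: the discrete multiple-try Metropolis (dMTM) sampler satisfies detailed
balance: `π(γ) A(γ, γ′) = π(γ′) A(γ′, γ)` where `γ′ = tog(i*, γ)`. -/
theorem dMTM_detailed_balance {p : ℕ} (pr S : (Fin p → Bool) → ℝ)
    (hpr : ∀ γ, 0 < pr γ) (hS : ∀ γ, 0 < S γ)
    (ω : Bool → Fin p → ℝ) (hω : ∀ b i, 0 < ω b i ∧ ω b i ≤ 1)
    (i : Fin p) (γ : Fin p → Bool) :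
    pr γ * AdMTM pr S ω i γ = pr (tog i γ) * AdMTM pr S ω i (tog i γ) := by
  have htt : tog i (tog i γ) = γ := tog_tog i γ
  unfold AdMTM
  simp only [htt, Finset.mul_sum]
  conv_rhs => rw [Finset.sum_comm]
  refine Finset.sum_congr rfl fun η _ => Finset.sum_congr rfl fun η' _ => ?_
  by_cases h : η i = true ∧ η' i = true
  · obtain ⟨h1, h2⟩ := h
    simp only [h1, h2, and_self, if_true, true_and, and_true]
    have hT1 : 0 < Tsel S γ (tog i γ) η := Tsel_pos S hS i γ (tog i γ) η h1
    have hT2 : 0 < Tsel S (tog i γ) γ η' := Tsel_pos S hS i (tog i γ) γ η' h2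
    have hA : 0 < pr γ * ω (γ i) i * Tsel S γ (tog i γ) η :=
      mul_pos (mul_pos (hpr γ) (hω (γ i) i).1) hT1
    have hB : 0 < pr (tog i γ) * ω (tog i γ i) i * Tsel S (tog i γ) γ η' :=
      mul_pos (mul_pos (hpr _) (hω _ i).1) hT2
    have hP : (∏ j ∈ Finset.univ.erase i, bern (ω (γ j) j) (η j) *
          bern (ω (tog i γ j) j) (η' j)) =
        ∏ j ∈ Finset.univ.erase i, bern (ω (tog i γ j) j) (η' j) *
          bern (ω (γ j) j) (η j) :=
      Finset.prod_congr rfl fun j _ => mul_comm _ _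
    rw [hP]
    set P := ∏ j ∈ Finset.univ.erase i, bern (ω (tog i γ j) j) (η' j) *
          bern (ω (γ j) j) (η j) with hPdef
    set A := pr γ * ω (γ i) i * Tsel S γ (tog i γ) η with hAdef
    set B := pr (tog i γ) * ω (tog i γ i) i * Tsel S (tog i γ) γ η' with hBdef
    calc pr γ * (P * (ω (γ i) i * Tsel S γ (tog i γ) η * min 1 (B / A)))
        = P * (A * min 1 (B / A)) := by rw [hAdef]; ring
      _ = P * (B * min 1 (A / B)) := by rw [min_helper hA hB]
      _ = pr (tog i γ) * (P * (ω (tog i γ i) i * Tsel S (tog i γ) γ η' *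
            min 1 (A / B))) := by rw [hBdef]; ring
  · have h' : ¬ (η' i = true ∧ η i = true) := fun hc => h ⟨hc.2, hc.1⟩
    simp only [h, h', if_false, mul_zero]
end

section
/- Let p ∈ ℕ, let Γ = {0,1}^p, let π : Γ → (0,∞), let S : Γ → (0,∞), let v ∈ [0,∞)^p, let f, g : [0,∞) → (0,1], and let w_S : {0,…,p} → (0,1]. Fix a*, r* ∈ {1,…,p} and γ ∈ Γ with γ_{a*} = 0 and γ_{r*} = 1, and set γ′ = tog(a*, tog(r*, γ)), so |γ′| = |γ|. For an inclusion configuration η assigning η_a ∈ {0,1} to each a with γ_a = 0 and η_r ∈ {0,1} to each r with γ_r = 1, carrying probability ∏_{a : γ_a = 0} f(v_a)^{η_a}(1−f(v_a))^{1−η_a} · ∏_{r : γ_r = 1} g(v_r)^{η_r}(1−g(v_r))^{1−η_r}, let the forward swap set be N_F(γ, η) = {tog(a, tog(r, γ)) : η_a = η_r = 1, γ_a = 0, γ_r = 1}, and let T_F(γ, γ′; η) = S(γ′)/Σ_{γ̃ ∈ N_F(γ,η)} S(γ̃); the analogous objects are defined from γ′ with inclusion probabilities f(v_{a′}) for predictors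 inactive in γ′ and g(v_{r′}) for predictors active in γ′. Define the swap-move transition probability A_S(γ, γ′) = w_S(|γ|) · Σ over configurations (η, η′) with η_{a*} = η_{r*} = 1 and η′_{a*} = η′_{r*} = 1 of [the product of the Bernoulli probabilities of all coordinates of η and η′ other than the forced ones (a*, r*)] · f(v_{a*}) g(v_{r*}) · T_F(γ, γ′; η) · min{1, π(γ′) f(v_{r*}) g(v_{a*}) T_B(γ′, γ; η′)/(π(γ) f(v_{a*}) g(v_{r*}) T_F(γ, γ′; η))}, and define A_S(γ′, γ) symmetrically. Then π(γ) A_S(γ, γ′) = π(γ′) A_S(γ′, γ). -/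
/-- The size `|γ|` of an inclusion vector: the number of active coordinates. -/
def gsize {p : ℕ} (γ : Fin p → Bool) : ℕ :=
  (Finset.univ.filter fun i => γ i = true).card

/-- Inclusion probability of predictor `j` for a swap move from state `γ`:
`f(v_j)` if `j` is inactive in `γ`, and `g(v_j)` if `j` is active in `γ`. -/
noncomputable def qSwap {p : ℕ} (f g : ℝ → ℝ) (v : Fin p → ℝ) (γ : Fin p → Bool)
    (j : Fin p) : ℝ :=
  if γ j then g (v j) else f (v j)

open Classical in
/-- The forward swap set `N_F(γ, η) = {tog(a, tog(r, γ)) : η_a = η_r = 1, γ_a = 0, γ_r = 1}`. -/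
noncomputable def NFswap {p : ℕ} (γ η : Fin p → Bool) : Finset (Fin p → Bool) :=
  Finset.univ.filter fun x => ∃ a r, γ a = false ∧ γ r = true ∧
    η a = true ∧ η r = true ∧ x = tog a (tog r γ)

/-- Selection probability `T_F(γ, γ′; η) = S(γ′)/Σ_{γ̃ ∈ N_F(γ,η)} S(γ̃)`. -/
noncomputable def TFswap {p : ℕ} (S : (Fin p → Bool) → ℝ) (γ γ' : Fin p → Bool)
    (η : Fin p → Bool) : ℝ :=
  S γ' / ∑ x ∈ NFswap γ η, S x

/-- The pMTM swap-move transition probability `A_S(γ, γ′)` for the swap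
`γ′ = tog(a*, tog(r*, γ))` with `γ_{a*} = 0`, `γ_{r*} = 1`: the forced pair
`(a*, r*)` contributes `f(v_{a*}) g(v_{r*})` forward and `f(v_{r*}) g(v_{a*})`
backward, and all other coordinates of the configurations `(η, η′)` carry their
Bernoulli probabilities. -/
noncomputable def Aswap {p : ℕ} (pr S : (Fin p → Bool) → ℝ) (wS : ℕ → ℝ)
    (f g : ℝ → ℝ) (v : Fin p → ℝ) (a r : Fin p) (γ : Fin p → Bool) : ℝ :=
  let γ' := tog a (tog r γ)
  wS (gsize γ) *
    ∑ η : Fin p → Bool, ∑ η' : Fin p → Bool,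
      if η a = true ∧ η r = true ∧ η' a = true ∧ η' r = true then
        (∏ j ∈ (Finset.univ.erase a).erase r,
          bern (qSwap f g v γ j) (η j) * bern (qSwap f g v γ' j) (η' j)) *
        (qSwap f g v γ a * qSwap f g v γ r * TFswap S γ γ' η *
          min 1 (pr γ' * (qSwap f g v γ' r * qSwap f g v γ' a * TFswap S γ' γ η') /
                 (pr γ * (qSwap f g v γ a * qSwap f g v γ r * TFswap S γ γ' η))))
      else 0


private lemma min_key (X Y : ℝ) (hX : 0 < X) (hY : 0 < Y) :
    X * min 1 (Y / X) = Y * min 1 (X / Y) := by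
  rw [mul_min_of_nonneg _ _ hX.le, mul_min_of_nonneg _ _ hY.le,
      mul_one, mul_one, mul_div_cancel₀ _ hX.ne', mul_div_cancel₀ _ hY.ne', min_comm]

private lemma NFsum_pos {p : ℕ} (S : (Fin p → Bool) → ℝ) (hS : ∀ γ, 0 < S γ)
    (δ η : Fin p → Bool) (A R : Fin p) (hA : δ A = false) (hR : δ R = true)
    (hηA : η A = true) (hηR : η R = true) :
    0 < ∑ x ∈ NFswap δ η, S x := by
  apply Finset.sum_pos (fun x _ => hS x)
  refine ⟨tog A (tog R δ), ?_⟩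
  simp only [NFswap, Finset.mem_filter, Finset.mem_univ, true_and]
  exact ⟨A, R, hA, hR, hηA, hηR, rfl⟩

/-- Theorem 3.1 (swap case): the pMTM sampler satisfies detailed balance for swap
moves: `π(γ) A_S(γ, γ′) = π(γ′) A_S(γ′, γ)`, where `γ′ = tog(a*, tog(r*, γ))` and the
reverse swap from `γ′` toggles the pair `(r*, a*)`. -/
theorem pMTM_swap_detailed_balance {p : ℕ} (pr S : (Fin p → Bool) → ℝ)
    (hpr : ∀ γ, 0 < pr γ) (hS : ∀ γ, 0 < S γ)
    (v : Fin p → ℝ) (hv : ∀ j, 0 ≤ v j)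
    (f g : ℝ → ℝ) (hf : ∀ x, 0 ≤ x → 0 < f x ∧ f x ≤ 1)
    (hg : ∀ x, 0 ≤ x → 0 < g x ∧ g x ≤ 1)
    (wS : ℕ → ℝ) (hwS : ∀ k, 0 < wS k ∧ wS k ≤ 1)
    (a r : Fin p) (γ : Fin p → Bool) (ha : γ a = false) (hr : γ r = true) :
    pr γ * Aswap pr S wS f g v a r γ
      = pr (tog a (tog r γ)) * Aswap pr S wS f g v r a (tog a (tog r γ)) := by
  classical
  have har : a ≠ r := by
    intro h; rw [h, hr] at ha; exact absurd ha (by simp)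
  set γ' := tog a (tog r γ) with hγ'def
  have htra : (tog r γ) a = γ a := by
    simp [tog, Function.update_apply, har]
  have hγ'a : γ' a = true := by
    simp [hγ'def, tog, Function.update_apply, htra, ha, har]
  have hγ'r : γ' r = false := by
    simp [hγ'def, tog, Function.update_apply, har.symm, hr]
  have hother : ∀ j, j ≠ a → j ≠ r → γ' j = γ j := by
    intro j hja hjr
    simp [hγ'def, tog, Function.update_apply, hja, hjr]
  have hback : tog r (tog a γ') = γ := by
    funext j
    by_cases hja : j = a
    · subst hja
      simp [tog, Function.update_apply, har, hγ'a, ha]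
    · by_cases hjr : j = r
      · subst hjr
        simp [tog, Function.update_apply, har.symm, hγ'r, hr]
      · simp [tog, Function.update_apply, hja, hjr, hother j hja hjr]
  have hsize : gsize γ' = gsize γ := by
    have hfilter : (Finset.univ.filter fun i => γ' i = true)
        = insert a ((Finset.univ.filter fun i => γ i = true).erase r) := by
      ext j
      by_cases hja : j = a
      · subst hja
        simp [hγ'a]
      · by_cases hjr : j = r
        · subst hjr
          simp [hγ'r, hja]
        · simp [Finset.mem_insert, Finset.mem_erase, hja, hjr, hother j hja hjr]
    have hamem : a ∉ (Finset.univ.filter fun i => γ i = true).erase r := by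
      simp [Finset.mem_erase, ha]
    have hrmem : r ∈ (Finset.univ.filter fun i => γ i = true) := by simp [hr]
    have hcardpos : 0 < (Finset.univ.filter fun i => γ i = true).card :=
      Finset.card_pos.mpr ⟨r, hrmem⟩
    rw [gsize, gsize, hfilter, Finset.card_insert_of_notMem hamem,
        Finset.card_erase_of_mem hrmem]
    omega
  have hfa : 0 < f (v a) := (hf _ (hv a)).1
  have hfr : 0 < f (v r) := (hf _ (hv r)).1
  have hga : 0 < g (v a) := (hg _ (hv a)).1
  have hgr : 0 < g (v r) := (hg _ (hv r)).1
  have hqa : qSwap f g v γ a = f (v a) := by simp [qSwap, ha]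
  have hqr : qSwap f g v γ r = g (v r) := by simp [qSwap, hr]
  have hqa' : qSwap f g v γ' a = g (v a) := by simp [qSwap, hγ'a]
  have hqr' : qSwap f g v γ' r = f (v r) := by simp [qSwap, hγ'r]
  rw [Aswap, Aswap]
  simp only [← hγ'def, hback, hsize]
  rw [← mul_assoc, ← mul_assoc, mul_comm (pr γ) (wS (gsize γ)),
      mul_comm (pr γ') (wS (gsize γ)), mul_assoc, mul_assoc]
  congr 1
  simp only [Finset.mul_sum]
  conv_rhs => rw [Finset.sum_comm]
  refine Finset.sum_congr rfl fun η _ => ?_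
  refine Finset.sum_congr rfl fun η' _ => ?_
  by_cases hC : η a = true ∧ η r = true ∧ η' a = true ∧ η' r = true
  · obtain ⟨hηa, hηr, hη'a, hη'r⟩ := hC
    rw [if_pos ⟨hηa, hηr, hη'a, hη'r⟩, if_pos ⟨hη'r, hη'a, hηr, hηa⟩]
    have hTf : 0 < TFswap S γ γ' η :=
      div_pos (hS γ') (NFsum_pos S hS γ η a r ha hr hηa hηr)
    have hTb : 0 < TFswap S γ' γ η' :=
      div_pos (hS γ) (NFsum_pos S hS γ' η' r a hγ'r hγ'a hη'r hη'a)
    have hX : 0 < pr γ * (qSwap f g v γ a * qSwap f g v γ r * TFswap S γ γ' η) := by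
      exact mul_pos (hpr γ) (mul_pos (mul_pos (hqa ▸ hfa) (hqr ▸ hgr)) hTf)
    have hY : 0 < pr γ' * (qSwap f g v γ' r * qSwap f g v γ' a * TFswap S γ' γ η') := by
      exact mul_pos (hpr γ') (mul_pos (mul_pos (hqr' ▸ hfr) (hqa' ▸ hga)) hTb)
    have hW : (∏ j ∈ (Finset.univ.erase r).erase a,
          bern (qSwap f g v γ' j) (η' j) * bern (qSwap f g v γ j) (η j))
        = ∏ j ∈ (Finset.univ.erase a).erase r,
          bern (qSwap f g v γ j) (η j) * bern (qSwap f g v γ' j) (η' j) := by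
      have hE : (Finset.univ.erase r).erase a = (Finset.univ.erase a).erase r := by
        ext j; simp only [Finset.mem_erase]; tauto
      rw [hE]
      exact Finset.prod_congr rfl fun j _ => mul_comm _ _
    rw [hW]
    have key := min_key _ _ hX hY
    set X := pr γ * (qSwap f g v γ a * qSwap f g v γ r * TFswap S γ γ' η) with hXdef
    set Y := pr γ' * (qSwap f g v γ' r * qSwap f g v γ' a * TFswap S γ' γ η') with hYdef
    set W := ∏ j ∈ (Finset.univ.erase a).erase r,
        bern (qSwap f g v γ j) (η j) * bern (qSwap f g v γ' j) (η' j) with hWdef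
    calc pr γ * (W * (qSwap f g v γ a * qSwap f g v γ r * TFswap S γ γ' η *
            min 1 (Y / X)))
        = W * (X * min 1 (Y / X)) := by rw [hXdef]; ring
      _ = W * (Y * min 1 (X / Y)) := by rw [key]
      _ = pr γ' * (W * (qSwap f g v γ' r * qSwap f g v γ' a * TFswap S γ' γ η' *
            min 1 (X / Y))) := by rw [hYdef]; ring
  · rw [if_neg hC, if_neg (by tauto), mul_zero, mul_zero]
end

section
/- Let n, k ∈ ℕ with n ≥ 1 and k ≥ 1, let X be a real n × k matrix such that XᵀX is invertible, let Y ∈ ℝ^n with Y ≠ 0, and let g > 0. Let P = X(XᵀX)⁻¹Xᵀ and R² = YᵀPY/‖Y‖₂². Then ∫₀^∞ ∫_{ℝ^k} (φ/(2π))^{n/2} exp(−(φ/2)‖Y − Xβ‖₂²) · (φ/(2πg))^{k/2} (det(XᵀX))^{1/2} exp(−(φ/(2g)) βᵀXᵀXβ) · φ^{−1} dβ dφ = Γ(n/2) (1+g)^{(n−k)/2} / (π^{n/2} ‖Y‖₂ⁿ (1 + g(1 − R²))^{n/2}), which equals the paper's expression [Γ(n/2)(1+g)^{n/2}/(π^{n/2}‖Y‖₂ⁿ)]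 · (1+g)^{−k/2}/[1 + g(1 − R²)]^{n/2}. -/
/-!
Completing the square in `β` gives
`‖Y - Xβ‖² + g⁻¹ βᵀXᵀXβ = (1 + g)/g · (β - β̂)ᵀXᵀX(β - β̂) + S`
with `β̂ = g/(1+g) · (XᵀX)⁻¹XᵀY` and `S = ‖Y‖²(1 + g(1 - R²))/(1 + g) > 0`.
The Gaussian integral over `β` (after the substitution `β ↦ (XᵀX)^{1/2} β`) cancels the
factor `√det(XᵀX)` of the prior and leaves `(1 + g)^{-k/2} (2π)^{-n/2} φ^{n/2-1} e^{-Sφ/2}`,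
whose integral over `φ > 0` is `Γ(n/2) (2/S)^{n/2}`.
-/

open Matrix MeasureTheory
open scoped MatrixOrder

section GaussianIntegral

variable {ι : Type*} [Fintype ι]

theorem integral_exp_neg_mul_dotProduct_self {c : ℝ} (hc : 0 < c) :
    ∫ x : ι → ℝ, Real.exp (-(c * (x ⬝ᵥ x))) = (Real.pi / c) ^ ((Fintype.card ι : ℝ) / 2) := by
  have hprod (x : ι → ℝ) : Real.exp (-(c * (x ⬝ᵥ x))) = ∏ i, Real.exp (-c * x i ^ 2) := by
    simp only [← Real.exp_sum, dotProduct, Finset.mul_sum, sq, neg_mul, Finset.sum_neg_distrib]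
  simp_rw [hprod]
  rw [volume_pi, integral_fintype_prod_eq_pow (ι := ι) (fun t => Real.exp (-c * t ^ 2)),
    integral_gaussian, Real.sqrt_eq_rpow, ← Real.rpow_natCast, ← Real.rpow_mul (by positivity)]
  ring_nf

variable [DecidableEq ι]

theorem integral_comp_mulVec {B : Matrix ι ι ℝ} (hB : B.det ≠ 0) (f : (ι → ℝ) → ℝ) :
    ∫ x, f (B *ᵥ x) = |B.det|⁻¹ * ∫ x, f x := by
  have hdet : LinearMap.det (toLin' B) ≠ 0 := by rwa [LinearMap.det_toLin']
  have hemb : MeasurableEmbedding (toLin' B) :=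
    ((toLin' B).equivOfDetNeZero hdet).toContinuousLinearEquiv.toHomeomorph.measurableEmbedding
  change ∫ x, f (toLin' B x) = _
  rw [← hemb.integral_map, Real.map_matrix_volume_pi_eq_smul_volume_pi hB,
    integral_smul_measure, ENNReal.toReal_ofReal (abs_nonneg _), abs_inv, smul_eq_mul]

theorem integral_exp_neg_mul_dotProduct_mulVec {A : Matrix ι ι ℝ} (hA : A.PosDef) {c : ℝ}
    (hc : 0 < c) :
    ∫ x, Real.exp (-(c * (x ⬝ᵥ A *ᵥ x))) =
      (Real.pi / c) ^ ((Fintype.card ι : ℝ) / 2) / Real.sqrt A.det := by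
  set B := CFC.sqrt A
  have hBB : B * B = A := CFC.sqrt_mul_sqrt_self A hA.posSemidef.nonneg
  have hBt : Bᵀ = B := by
    have := (CFC.sqrt_nonneg A).posSemidef.1
    rwa [IsHermitian, conjTranspose_eq_transpose_of_trivial] at this
  have hdet : B.det ^ 2 = A.det := by rw [← hBB, det_mul, sq]
  have hB : B.det ≠ 0 := (pow_ne_zero_iff two_ne_zero).mp (hdet ▸ hA.det_pos.ne')
  have hquad (x : ι → ℝ) : x ⬝ᵥ A *ᵥ x = B *ᵥ x ⬝ᵥ B *ᵥ x := by
    rw [← hBB, ← mulVec_mulVec, dotProduct_mulVec, ← mulVec_transpose, hBt]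
  simp_rw [hquad]
  rw [integral_comp_mulVec hB (fun y => Real.exp (-(c * (y ⬝ᵥ y)))),
    integral_exp_neg_mul_dotProduct_self hc, ← hdet, Real.sqrt_sq_eq_abs]
  ring

end GaussianIntegral

section CompleteSquare

variable {m ι : Type*} [Fintype m] [Fintype ι]

theorem mulVec_dotProduct_mulVec_self (X : Matrix m ι ℝ) (β : ι → ℝ) :
    X *ᵥ β ⬝ᵥ X *ᵥ β = β ⬝ᵥ (Xᵀ * X) *ᵥ β := by
  rw [← mulVec_mulVec, dotProduct_mulVec β Xᵀ, ← mulVec_transpose, transpose_transpose]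

theorem dotProduct_sub_self_add_mul_pos {u : m → ℝ} (hu : u ≠ 0) (v : m → ℝ) {c : ℝ}
    (hc : 0 < c) : 0 < (u - v) ⬝ᵥ (u - v) + c * (v ⬝ᵥ v) := by
  have h₁ : 0 ≤ (u - v) ⬝ᵥ (u - v) := dotProduct_self_star_nonneg _
  have h₂ : 0 ≤ v ⬝ᵥ v := dotProduct_self_star_nonneg _
  by_contra! h
  have hv : v = 0 := dotProduct_self_eq_zero.mp (by nlinarith)
  have huv : u - v = 0 := dotProduct_self_eq_zero.mp (by nlinarith)
  exact hu (by rwa [hv, sub_zero] at huv)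

variable [DecidableEq ι]

theorem posDef_transpose_mul_self_of_isUnit {X : Matrix m ι ℝ} (hX : IsUnit (Xᵀ * X)) :
    (Xᵀ * X).PosDef := by
  have hinj : Function.Injective X.mulVec := fun u v h =>
    mulVec_injective_iff_isUnit.mpr hX (by simp only [← mulVec_mulVec, h])
  simpa [conjTranspose_eq_transpose_of_trivial] using PosDef.conjTranspose_mul_self X hinj

noncomputable def gPosteriorMean (X : Matrix m ι ℝ) (Y : m → ℝ) (g : ℝ) : ι → ℝ :=
  (g / (1 + g)) • ((Xᵀ * X)⁻¹ *ᵥ (Xᵀ *ᵥ Y))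

noncomputable def gResidualSS (X : Matrix m ι ℝ) (Y : m → ℝ) (g : ℝ) : ℝ :=
  Y ⬝ᵥ Y - g / (1 + g) * (Y ⬝ᵥ (X * (Xᵀ * X)⁻¹ * Xᵀ) *ᵥ Y)

theorem gPrior_complete_square (X : Matrix m ι ℝ) (hX : IsUnit (Xᵀ * X)) (Y : m → ℝ)
    {g : ℝ} (hg : 0 < g) (β : ι → ℝ) :
    (Y - X *ᵥ β) ⬝ᵥ (Y - X *ᵥ β) + g⁻¹ * (β ⬝ᵥ (Xᵀ * X) *ᵥ β) =
      (1 + g) / g * ((β - gPosteriorMean X Y g) ⬝ᵥ (Xᵀ * X) *ᵥ (β - gPosteriorMean X Y g)) +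
        gResidualSS X Y g := by
  set w := Xᵀ *ᵥ Y
  have hAt : (Xᵀ * X)ᵀ = Xᵀ * X := by simp
  have hAβ₀ : (Xᵀ * X) *ᵥ gPosteriorMean X Y g = (g / (1 + g)) • w := by
    rw [gPosteriorMean, mulVec_smul, mulVec_mulVec,
      mul_nonsing_inv _ ((isUnit_iff_isUnit_det _).mp hX), one_mulVec]
  have hcross : gPosteriorMean X Y g ⬝ᵥ (Xᵀ * X) *ᵥ β = g / (1 + g) * (β ⬝ᵥ w) := by
    rw [dotProduct_mulVec, ← mulVec_transpose, hAt, dotProduct_comm, hAβ₀, dotProduct_smul,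
      smul_eq_mul]
  have hβ₀ : gPosteriorMean X Y g ⬝ᵥ w = g / (1 + g) * (w ⬝ᵥ (Xᵀ * X)⁻¹ *ᵥ w) := by
    rw [gPosteriorMean, smul_dotProduct, smul_eq_mul, dotProduct_comm]
  have hXY : X *ᵥ β ⬝ᵥ Y = β ⬝ᵥ w := by
    rw [dotProduct_comm, dotProduct_mulVec, ← mulVec_transpose, dotProduct_comm]
  have hP : Y ⬝ᵥ (X * (Xᵀ * X)⁻¹ * Xᵀ) *ᵥ Y = w ⬝ᵥ (Xᵀ * X)⁻¹ *ᵥ w := by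
    rw [← mulVec_mulVec, ← mulVec_mulVec, dotProduct_mulVec, ← mulVec_transpose]
  have hres : (Y - X *ᵥ β) ⬝ᵥ (Y - X *ᵥ β) =
      Y ⬝ᵥ Y - 2 * (β ⬝ᵥ w) + β ⬝ᵥ (Xᵀ * X) *ᵥ β := by
    rw [sub_dotProduct, dotProduct_sub, dotProduct_sub, mulVec_dotProduct_mulVec_self,
      dotProduct_comm Y (X *ᵥ β), hXY]
    ring
  have hquad : (β - gPosteriorMean X Y g) ⬝ᵥ (Xᵀ * X) *ᵥ (β - gPosteriorMean X Y g) =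
      β ⬝ᵥ (Xᵀ * X) *ᵥ β - 2 * (g / (1 + g)) * (β ⬝ᵥ w) +
        (g / (1 + g)) ^ 2 * (w ⬝ᵥ (Xᵀ * X)⁻¹ *ᵥ w) := by
    rw [mulVec_sub, dotProduct_sub, sub_dotProduct, sub_dotProduct, hcross, hAβ₀,
      dotProduct_smul, smul_eq_mul, dotProduct_smul, smul_eq_mul, hβ₀, dotProduct_comm _ w]
    ring
  rw [hres, hquad, gResidualSS, hP]
  field_simp
  ring

/-- `gResidualSS` is the value of the completed square at its minimiser `gPosteriorMean`. -/
theorem gResidualSS_pos (X : Matrix m ι ℝ) (hX : IsUnit (Xᵀ * X)) {Y : m → ℝ} (hY : Y ≠ 0)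
    {g : ℝ} (hg : 0 < g) : 0 < gResidualSS X Y g := by
  have h := gPrior_complete_square X hX Y hg (gPosteriorMean X Y g)
  rw [sub_self, zero_dotProduct, mul_zero, zero_add, ← mulVec_dotProduct_mulVec_self] at h
  exact h ▸ dotProduct_sub_self_add_mul_pos hY _ (inv_pos.mpr hg)

theorem gResidualSS_eq (X : Matrix m ι ℝ) {Y : m → ℝ} (hY : Y ≠ 0) {g : ℝ} (hg : 0 < g) :
    gResidualSS X Y g =
      Y ⬝ᵥ Y * (1 + g * (1 - Y ⬝ᵥ (X * (Xᵀ * X)⁻¹ * Xᵀ) *ᵥ Y / (Y ⬝ᵥ Y))) / (1 + g) := by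
  have hYY : Y ⬝ᵥ Y ≠ 0 := fun h => hY (dotProduct_self_eq_zero.mp h)
  rw [gResidualSS]
  field_simp
  ring

end CompleteSquare

section MarginalLikelihood

variable {n k : ℕ}

noncomputable def gaussianLikelihood (X : Matrix (Fin n) (Fin k) ℝ) (Y : Fin n → ℝ) (φ : ℝ)
    (β : Fin k → ℝ) : ℝ :=
  (φ / (2 * Real.pi)) ^ ((n : ℝ) / 2) * Real.exp (-(φ / 2) * ∑ i, (Y i - (X.mulVec β) i) ^ 2)

noncomputable def gPriorDensity (X : Matrix (Fin n) (Fin k) ℝ) (g φ : ℝ) (β : Fin k → ℝ) : ℝ :=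
  (φ / (2 * Real.pi * g)) ^ ((k : ℝ) / 2) * Real.sqrt (Xᵀ * X).det *
    Real.exp (-(φ / (2 * g)) * (β ⬝ᵥ (Xᵀ * X).mulVec β))

theorem normalizing_constants_mul_eq {D φ g : ℝ} (hD : 0 < D) (hφ : 0 < φ) (hg : 0 < g) :
    (φ / (2 * Real.pi)) ^ ((n : ℝ) / 2) * (φ / (2 * Real.pi * g)) ^ ((k : ℝ) / 2) * Real.sqrt D *
        φ⁻¹ * ((Real.pi / (φ * (1 + g) / (2 * g))) ^ ((k : ℝ) / 2) / Real.sqrt D) =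
      (1 + g) ^ (-((k : ℝ) / 2)) / (2 * Real.pi) ^ ((n : ℝ) / 2) * φ ^ ((n : ℝ) / 2 - 1) := by
  have hprior : (φ / (2 * Real.pi * g)) ^ ((k : ℝ) / 2) *
      (Real.pi / (φ * (1 + g) / (2 * g))) ^ ((k : ℝ) / 2) = (1 + g) ^ (-((k : ℝ) / 2)) := by
    rw [← Real.mul_rpow (by positivity) (by positivity), Real.rpow_neg (by positivity),
      ← Real.inv_rpow (by positivity)]
    congr 1
    field_simp
  have hlik : (φ / (2 * Real.pi)) ^ ((n : ℝ) / 2) * φ⁻¹ =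
      φ ^ ((n : ℝ) / 2 - 1) / (2 * Real.pi) ^ ((n : ℝ) / 2) := by
    rw [Real.div_rpow hφ.le (by positivity), Real.rpow_sub_one hφ.ne']
    ring
  have hsqrt : Real.sqrt D ≠ 0 := (Real.sqrt_pos.mpr hD).ne'
  calc _ = ((φ / (2 * Real.pi * g)) ^ ((k : ℝ) / 2) *
          (Real.pi / (φ * (1 + g) / (2 * g))) ^ ((k : ℝ) / 2)) *
        ((φ / (2 * Real.pi)) ^ ((n : ℝ) / 2) * φ⁻¹) * (Real.sqrt D / Real.sqrt D) := by ring
    _ = _ := by rw [hprior, hlik, div_self hsqrt]; ring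

theorem integral_gaussianLikelihood_mul_gPriorDensity {X : Matrix (Fin n) (Fin k) ℝ}
    (hX : IsUnit (Xᵀ * X)) (Y : Fin n → ℝ) {g : ℝ} (hg : 0 < g) {φ : ℝ} (hφ : 0 < φ) :
    ∫ β, gaussianLikelihood X Y φ β * gPriorDensity X g φ β * φ⁻¹ =
      (1 + g) ^ (-((k : ℝ) / 2)) / (2 * Real.pi) ^ ((n : ℝ) / 2) *
        (φ ^ ((n : ℝ) / 2 - 1) * Real.exp (-(gResidualSS X Y g / 2 * φ))) := by
  have hA := posDef_transpose_mul_self_of_isUnit hX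
  have hfactor (β : Fin k → ℝ) : gaussianLikelihood X Y φ β * gPriorDensity X g φ β * φ⁻¹ =
      (φ / (2 * Real.pi)) ^ ((n : ℝ) / 2) * (φ / (2 * Real.pi * g)) ^ ((k : ℝ) / 2) *
          Real.sqrt (Xᵀ * X).det * φ⁻¹ * Real.exp (-(gResidualSS X Y g / 2 * φ)) *
        Real.exp (-(φ * (1 + g) / (2 * g) *
          ((β - gPosteriorMean X Y g) ⬝ᵥ (Xᵀ * X) *ᵥ (β - gPosteriorMean X Y g)))) := by
    have hsum : ∑ i, (Y i - (X *ᵥ β) i) ^ 2 = (Y - X *ᵥ β) ⬝ᵥ (Y - X *ᵥ β) := by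
      simp [dotProduct, sq]
    have hexp : Real.exp (-(φ / 2) * ((Y - X *ᵥ β) ⬝ᵥ (Y - X *ᵥ β))) *
        Real.exp (-(φ / (2 * g)) * (β ⬝ᵥ (Xᵀ * X) *ᵥ β)) =
        Real.exp (-(gResidualSS X Y g / 2 * φ)) * Real.exp (-(φ * (1 + g) / (2 * g) *
          ((β - gPosteriorMean X Y g) ⬝ᵥ (Xᵀ * X) *ᵥ (β - gPosteriorMean X Y g)))) := by
      rw [← Real.exp_add, ← Real.exp_add]
      congr 1
      linear_combination (-(φ / 2)) * gPrior_complete_square X hX Y hg β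
    simp only [gaussianLikelihood, gPriorDensity, hsum]
    linear_combination ((φ / (2 * Real.pi)) ^ ((n : ℝ) / 2) *
      (φ / (2 * Real.pi * g)) ^ ((k : ℝ) / 2) * Real.sqrt (Xᵀ * X).det * φ⁻¹) * hexp
  simp_rw [hfactor]
  rw [integral_const_mul, integral_sub_right_eq_self
      (fun β => Real.exp (-(φ * (1 + g) / (2 * g) * (β ⬝ᵥ (Xᵀ * X) *ᵥ β)))) (gPosteriorMean X Y g),
    integral_exp_neg_mul_dotProduct_mulVec hA (by positivity), Fintype.card_fin, mul_right_comm,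
    normalizing_constants_mul_eq hA.det_pos hφ hg]
  ring

theorem gamma_integral_constant_eq {c T g : ℝ} (hc : 0 < c) (hT : 0 < T) (hg : 0 < g) :
    (1 + g) ^ (-((k : ℝ) / 2)) / (2 * Real.pi) ^ ((n : ℝ) / 2) *
        ((1 / (c * T / (1 + g) / 2)) ^ ((n : ℝ) / 2) * Real.Gamma ((n : ℝ) / 2)) =
      Real.Gamma ((n : ℝ) / 2) * (1 + g) ^ (((n : ℝ) - (k : ℝ)) / 2) /
        (Real.pi ^ ((n : ℝ) / 2) * Real.sqrt c ^ n * T ^ ((n : ℝ) / 2)) := by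
  have hg₁ : 0 < 1 + g := by linarith
  have hsqrt : Real.sqrt c ^ n = c ^ ((n : ℝ) / 2) := by
    rw [Real.sqrt_eq_rpow, ← Real.rpow_natCast, ← Real.rpow_mul hc.le, one_div_mul_eq_div]
  have h2 : (0 : ℝ) < 2 ^ ((n : ℝ) / 2) := by positivity
  rw [show 1 / (c * T / (1 + g) / 2) = 2 * (1 + g) / (c * T) by field_simp,
    Real.div_rpow (by positivity) (by positivity), Real.mul_rpow zero_le_two hg₁.le,
    Real.mul_rpow hc.le hT.le, Real.mul_rpow zero_le_two Real.pi_pos.le, hsqrt, sub_div,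
    Real.rpow_sub hg₁, Real.rpow_neg hg₁.le]
  field_simp

end MarginalLikelihood

theorem gprior_marginal_likelihood_general {n k : ℕ} (hn : 1 ≤ n)
    (X : Matrix (Fin n) (Fin k) ℝ) (hX : IsUnit (Xᵀ * X))
    (Y : Fin n → ℝ) (hY : Y ≠ 0) (g : ℝ) (hg : 0 < g) :
    (∫ φ in Set.Ioi (0 : ℝ), ∫ β : Fin k → ℝ,
      (φ / (2 * Real.pi)) ^ ((n : ℝ) / 2) *
        Real.exp (-(φ / 2) * ∑ i, (Y i - (X.mulVec β) i) ^ 2) *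
      ((φ / (2 * Real.pi * g)) ^ ((k : ℝ) / 2) * Real.sqrt (Xᵀ * X).det *
        Real.exp (-(φ / (2 * g)) * (β ⬝ᵥ (Xᵀ * X).mulVec β))) * φ⁻¹)
    = Real.Gamma ((n : ℝ) / 2) * (1 + g) ^ (((n : ℝ) - (k : ℝ)) / 2) /
        (Real.pi ^ ((n : ℝ) / 2) * Real.sqrt (Y ⬝ᵥ Y) ^ n *
          (1 + g * (1 - Y ⬝ᵥ (X * (Xᵀ * X)⁻¹ * Xᵀ).mulVec Y / (Y ⬝ᵥ Y)))
            ^ ((n : ℝ) / 2)) ∧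
    Real.Gamma ((n : ℝ) / 2) * (1 + g) ^ (((n : ℝ) - (k : ℝ)) / 2) /
        (Real.pi ^ ((n : ℝ) / 2) * Real.sqrt (Y ⬝ᵥ Y) ^ n *
          (1 + g * (1 - Y ⬝ᵥ (X * (Xᵀ * X)⁻¹ * Xᵀ).mulVec Y / (Y ⬝ᵥ Y)))
            ^ ((n : ℝ) / 2))
    = (Real.Gamma ((n : ℝ) / 2) * (1 + g) ^ ((n : ℝ) / 2) /
        (Real.pi ^ ((n : ℝ) / 2) * Real.sqrt (Y ⬝ᵥ Y) ^ n)) *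
      ((1 + g) ^ (-(k : ℝ) / 2) /
        (1 + g * (1 - Y ⬝ᵥ (X * (Xᵀ * X)⁻¹ * Xᵀ).mulVec Y / (Y ⬝ᵥ Y)))
          ^ ((n : ℝ) / 2)) := by
  have hS := gResidualSS_pos X hX hY hg
  have hYY : 0 < Y ⬝ᵥ Y := by simpa using dotProduct_self_star_pos_iff.mpr hY
  have hT : 0 < 1 + g * (1 - Y ⬝ᵥ (X * (Xᵀ * X)⁻¹ * Xᵀ) *ᵥ Y / (Y ⬝ᵥ Y)) := by
    rw [gResidualSS_eq X hY hg] at hS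
    exact (mul_pos_iff_of_pos_left hYY).mp ((div_pos_iff_of_pos_right (by linarith)).mp hS)
  refine ⟨?_, ?_⟩
  · change (∫ φ in Set.Ioi 0, ∫ β, gaussianLikelihood X Y φ β * gPriorDensity X g φ β * φ⁻¹) = _
    rw [setIntegral_congr_fun measurableSet_Ioi fun φ hφ =>
        integral_gaussianLikelihood_mul_gPriorDensity hX Y hg hφ,
      integral_const_mul, Real.integral_rpow_mul_exp_neg_mul_Ioi
        (half_pos (Nat.cast_pos.mpr hn)) (half_pos hS),
      gResidualSS_eq X hY hg]
    exact gamma_integral_constant_eq hYY hT hg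
  · rw [div_mul_div_comm, mul_assoc (Real.Gamma _), ← Real.rpow_add (by linarith), ← add_div,
      ← sub_eq_add_neg]

/-- The closed-form marginal likelihood under the g-prior with improper precision prior
`π(φ) ∝ 1/φ` (equations (2.6)–(2.8) of the paper): integrating the Gaussian likelihood
times the g-prior density of `β` times `1/φ` over `β ∈ ℝ^k` and `φ ∈ (0, ∞)` gives
`Γ(n/2)(1+g)^{(n−k)/2} / (π^{n/2} ‖Y‖₂ⁿ (1 + g(1 − R²))^{n/2})`, where
`R² = YᵀPY/‖Y‖₂²` with `P = X(XᵀX)⁻¹Xᵀ`; this equals the paper's expression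
`[Γ(n/2)(1+g)^{n/2}/(π^{n/2}‖Y‖₂ⁿ)] · (1+g)^{−k/2}/[1 + g(1 − R²)]^{n/2}`. -/
theorem gprior_marginal_likelihood {n k : ℕ} (hn : 1 ≤ n) (hk : 1 ≤ k)
    (X : Matrix (Fin n) (Fin k) ℝ) (hX : IsUnit (Xᵀ * X))
    (Y : Fin n → ℝ) (hY : Y ≠ 0) (g : ℝ) (hg : 0 < g) :
    (∫ φ in Set.Ioi (0 : ℝ), ∫ β : Fin k → ℝ,
      (φ / (2 * Real.pi)) ^ ((n : ℝ) / 2) *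
        Real.exp (-(φ / 2) * ∑ i, (Y i - (X.mulVec β) i) ^ 2) *
      ((φ / (2 * Real.pi * g)) ^ ((k : ℝ) / 2) * Real.sqrt (Xᵀ * X).det *
        Real.exp (-(φ / (2 * g)) * (β ⬝ᵥ (Xᵀ * X).mulVec β))) * φ⁻¹)
    = Real.Gamma ((n : ℝ) / 2) * (1 + g) ^ (((n : ℝ) - (k : ℝ)) / 2) /
        (Real.pi ^ ((n : ℝ) / 2) * Real.sqrt (Y ⬝ᵥ Y) ^ n *
          (1 + g * (1 - Y ⬝ᵥ (X * (Xᵀ * X)⁻¹ * Xᵀ).mulVec Y / (Y ⬝ᵥ Y)))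
            ^ ((n : ℝ) / 2)) ∧
    Real.Gamma ((n : ℝ) / 2) * (1 + g) ^ (((n : ℝ) - (k : ℝ)) / 2) /
        (Real.pi ^ ((n : ℝ) / 2) * Real.sqrt (Y ⬝ᵥ Y) ^ n *
          (1 + g * (1 - Y ⬝ᵥ (X * (Xᵀ * X)⁻¹ * Xᵀ).mulVec Y / (Y ⬝ᵥ Y)))
            ^ ((n : ℝ) / 2))
    = (Real.Gamma ((n : ℝ) / 2) * (1 + g) ^ ((n : ℝ) / 2) /
        (Real.pi ^ ((n : ℝ) / 2) * Real.sqrt (Y ⬝ᵥ Y) ^ n)) *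
      ((1 + g) ^ (-(k : ℝ) / 2) /
        (1 + g * (1 - Y ⬝ᵥ (X * (Xᵀ * X)⁻¹ * Xᵀ).mulVec Y / (Y ⬝ᵥ Y)))
          ^ ((n : ℝ) / 2)) :=
  gprior_marginal_likelihood_general hn X hX Y hY g hg
end

section
/- Let n, k ∈ ℕ with k ≥ 1, let X be a real n × k matrix such that XᵀX is invertible, let Y ∈ ℝ^n, let g > 0 and φ > 0, and let P = X(XᵀX)⁻¹Xᵀ. Then ∫_{ℝ^k} (φ/(2π))^{n/2} exp(−(φ/2)‖Y − Xβ‖₂²) · (φ/(2πg))^{k/2} (det(XᵀX))^{1/2} exp(−(φ/(2g)) βᵀXᵀXβ) dβ = (φ/(2π))^{n/2} (1+g)^{−k/2} exp(−(φ/2) Yᵀ(I_n − (g/(1+g))P)Y). -/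
/-!
Expanding `‖Y - Xβ‖²`, the exponent of the integrand is `-(βᵀ(t • XᵀX)β) + 2βᵀb + const` with
`t = φ(1+g)/(2g)` and `b = (φ/2)XᵀY`. Completing the square and translating reduces the integral
to the centred Gaussian integral `∫ exp(-xᵀMx) = π^{k/2}/√det M`, which follows from the
substitution `x ↦ Sx` with `SᵀS = M`. The term `bᵀ(t • XᵀX)⁻¹b = (φ/2)(g/(1+g))YᵀPY` left over
from completing the square gives the exponent, and `det (t • XᵀX) = t^k det (XᵀX)` turns the
prior's normalisation into `(1+g)^{-k/2}`.
-/

open Matrix MeasureTheory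

section QuadraticForms

variable {m n R : Type*} [Fintype m] [Fintype n]

theorem mulVec_dotProduct_mulVec_mulVec [CommSemiring R] (S : Matrix m n R) (M : Matrix m m R)
    (x : n → R) : S *ᵥ x ⬝ᵥ M *ᵥ (S *ᵥ x) = x ⬝ᵥ (Sᵀ * M * S) *ᵥ x := by
  rw [dotProduct_mulVec, vecMul_mulVec, dotProduct_mulVec, vecMul_vecMul, ← dotProduct_mulVec]

theorem sum_sub_mulVec_sq [CommRing R] (X : Matrix m n R) (y : m → R) (x : n → R) :
    ∑ i, (y i - (X *ᵥ x) i) ^ 2 = y ⬝ᵥ y - 2 * (x ⬝ᵥ Xᵀ *ᵥ y) + x ⬝ᵥ (Xᵀ * X) *ᵥ x := by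
  rw [← mulVec_mulVec, dotProduct_transpose_mulVec, dotProduct_transpose_mulVec]
  simp only [dotProduct, Finset.mul_sum, ← Finset.sum_sub_distrib, ← Finset.sum_add_distrib]
  exact Finset.sum_congr rfl fun i _ ↦ by ring

end QuadraticForms

section GaussianIntegral

variable {ι : Type*} [Fintype ι]

theorem integral_exp_neg_dotProduct_self :
    ∫ x : ι → ℝ, Real.exp (-(x ⬝ᵥ x)) = √Real.pi ^ Fintype.card ι := by
  have hprod (x : ι → ℝ) : Real.exp (-(x ⬝ᵥ x)) = ∏ i, Real.exp (-1 * x i ^ 2) := by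
    simp [dotProduct, ← Real.exp_sum, ← Finset.sum_neg_distrib, pow_two]
  simp_rw [hprod]
  rw [volume_pi, integral_fintype_prod_eq_pow (fun t : ℝ ↦ Real.exp (-1 * t ^ 2)),
    integral_gaussian, div_one]

variable [DecidableEq ι]

theorem integral_comp_mulVec_s11 {E : Type*} [NormedAddCommGroup E] [NormedSpace ℝ E]
    (S : Matrix ι ι ℝ) (hS : S.det ≠ 0) (f : (ι → ℝ) → E) :
    ∫ x, f (S *ᵥ x) = |S.det|⁻¹ • ∫ x, f x := by
  let e := (S.toLinearEquiv' (S.invertibleOfIsUnitDet hS.isUnit)).toContinuousLinearEquiv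
  calc ∫ x, f (S *ᵥ x) = ∫ y, f y ∂(Measure.map (toLin' S) volume) :=
        (e.toHomeomorph.measurableEmbedding.integral_map f).symm
    _ = |S.det|⁻¹ • ∫ x, f x := by
        rw [Measure.map_linearMap_addHaar_eq_smul_addHaar _ (by rwa [LinearMap.det_toLin']),
          integral_smul_measure, LinearMap.det_toLin', ENNReal.toReal_ofReal (abs_nonneg _),
          abs_inv]

theorem Matrix.PosDef.integral_exp_neg_dotProduct_mulVec {M : Matrix ι ι ℝ} (hM : M.PosDef) :
    ∫ x, Real.exp (-(x ⬝ᵥ M *ᵥ x)) = √Real.pi ^ Fintype.card ι / √M.det := by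
  obtain ⟨S, hS⟩ : ∃ S : Matrix ι ι ℝ, Sᵀ * S = M := by
    open scoped MatrixOrder in
    obtain ⟨S, hS⟩ := CStarAlgebra.nonneg_iff_eq_star_mul_self.mp hM.posSemidef.nonneg
    exact ⟨S, hS.symm⟩
  have hSM (x : ι → ℝ) : x ⬝ᵥ M *ᵥ x = S *ᵥ x ⬝ᵥ S *ᵥ x := by
    simpa [hS] using (mulVec_dotProduct_mulVec_mulVec S 1 x).symm
  have hdet : |S.det| = √M.det := by
    rw [← hS, det_mul, det_transpose, Real.sqrt_mul_self_eq_abs]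
  have hdet0 : S.det ≠ 0 := by
    rw [← abs_pos, hdet]; exact Real.sqrt_pos.2 hM.det_pos
  simp_rw [hSM]
  rw [integral_comp_mulVec_s11 S hdet0 (fun y ↦ Real.exp (-(y ⬝ᵥ y))), integral_exp_neg_dotProduct_self,
    hdet, smul_eq_mul, inv_mul_eq_div]

theorem Matrix.PosDef.integral_exp_neg_dotProduct_mulVec_add {M : Matrix ι ι ℝ} (hM : M.PosDef)
    (b : ι → ℝ) :
    ∫ x, Real.exp (-(x ⬝ᵥ M *ᵥ x) + 2 * (x ⬝ᵥ b)) =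
      Real.exp (b ⬝ᵥ M⁻¹ *ᵥ b) * (√Real.pi ^ Fintype.card ι / √M.det) := by
  set μ := M⁻¹ *ᵥ b
  have hMμ : M *ᵥ μ = b := by
    simp [μ, mulVec_mulVec, mul_nonsing_inv _ ((isUnit_iff_isUnit_det M).1 hM.isUnit)]
  have hsquare (x : ι → ℝ) : -(x ⬝ᵥ M *ᵥ x) + 2 * (x ⬝ᵥ b) =
      -((x - μ) ⬝ᵥ M *ᵥ (x - μ)) + b ⬝ᵥ μ := by
    have : μ ⬝ᵥ M *ᵥ x = x ⬝ᵥ b := by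
      rw [← hM.isHermitian.eq, conjTranspose_eq_transpose_of_trivial, dotProduct_transpose_mulVec,
        hMμ]
    rw [mulVec_sub, dotProduct_sub, sub_dotProduct, sub_dotProduct, this, hMμ, dotProduct_comm μ b]
    ring
  simp_rw [hsquare, Real.exp_add]
  rw [integral_mul_const, integral_sub_right_eq_self (fun x ↦ Real.exp (-(x ⬝ᵥ M *ᵥ x))),
    hM.integral_exp_neg_dotProduct_mulVec, mul_comm]

end GaussianIntegral

theorem gprior_normalizing_constant (k : ℕ) {g φ d : ℝ} (hg : 0 < g) (hφ : 0 < φ) (hd : 0 < d) :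
    (φ / (2 * Real.pi * g)) ^ ((k : ℝ) / 2) * √d *
        (√Real.pi ^ k / √((φ * (1 + g) / (2 * g)) ^ k * d)) = (1 + g) ^ (-(k : ℝ) / 2) := by
  set t := φ * (1 + g) / (2 * g)
  have hπ := Real.pi_pos
  have hsqrt_pow : √(t ^ k) = √t ^ k := by
    rw [Real.sqrt_eq_rpow, Real.sqrt_eq_rpow, ← Real.rpow_natCast, ← Real.rpow_mul (by positivity),
      mul_comm, Real.rpow_mul_natCast (by positivity)]
  have hsqrt_t : √(φ / (2 * Real.pi * g)) * √Real.pi * √(1 + g) = √t := by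
    rw [← Real.sqrt_mul (by positivity), ← Real.sqrt_mul (by positivity)]
    congr 1
    simp only [t]
    field_simp
  rw [Real.rpow_div_two_eq_sqrt _ (by positivity), Real.rpow_div_two_eq_sqrt _ (by positivity),
    Real.rpow_neg (by positivity), Real.rpow_natCast, Real.rpow_natCast,
    Real.sqrt_mul (by positivity), hsqrt_pow, ← hsqrt_t]
  have : 0 < √(1 + g) := by positivity
  have : 0 < √d := by positivity
  field_simp
  ring

theorem gprior_exponent_eq {m n : Type*} [Fintype m] [Fintype n] (X : Matrix m n ℝ) (y : m → ℝ)
    (x : n → ℝ) {g : ℝ} (hg : g ≠ 0) (φ : ℝ) :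
    -(φ / 2) * ∑ i, (y i - (X *ᵥ x) i) ^ 2 + -(φ / (2 * g)) * (x ⬝ᵥ (Xᵀ * X) *ᵥ x) =
      -(φ / 2) * (y ⬝ᵥ y) + (-(x ⬝ᵥ ((φ * (1 + g) / (2 * g)) • (Xᵀ * X)) *ᵥ x) +
        2 * (x ⬝ᵥ (φ / 2) • (Xᵀ *ᵥ y))) := by
  simp only [sum_sub_mulVec_sq, smul_mulVec, dotProduct_smul, smul_eq_mul]
  field_simp
  ring

theorem smul_transpose_mulVec_dotProduct_inv_smul_mulVec {m n : Type*} [Fintype m] [Fintype n]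
    [DecidableEq n] (X : Matrix m n ℝ) {A : Matrix n n ℝ} (hA : IsUnit A.det) (y : m → ℝ)
    (c : ℝ) {t : ℝ} (ht : t ≠ 0) :
    c • (Xᵀ *ᵥ y) ⬝ᵥ (t • A)⁻¹ *ᵥ (c • (Xᵀ *ᵥ y)) = c ^ 2 / t * (y ⬝ᵥ (X * A⁻¹ * Xᵀ) *ᵥ y) := by
  have := invertibleOfNonzero ht
  rw [inv_smul _ _ hA, invOf_eq_inv]
  simp only [smul_mulVec, mulVec_smul, dotProduct_smul, smul_dotProduct, smul_eq_mul,
    mulVec_dotProduct_mulVec_mulVec, transpose_transpose]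
  ring

theorem gprior_beta_integral_general {n k : ℕ}
    (X : Matrix (Fin n) (Fin k) ℝ) (hX : IsUnit (Xᵀ * X))
    (Y : Fin n → ℝ) (g φ : ℝ) (hg : 0 < g) (hφ : 0 < φ) :
    (∫ β : Fin k → ℝ,
      (φ / (2 * Real.pi)) ^ ((n : ℝ) / 2) *
        Real.exp (-(φ / 2) * ∑ i, (Y i - (X.mulVec β) i) ^ 2) *
      ((φ / (2 * Real.pi * g)) ^ ((k : ℝ) / 2) * Real.sqrt (Xᵀ * X).det *
        Real.exp (-(φ / (2 * g)) * (β ⬝ᵥ (Xᵀ * X).mulVec β))))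
    = (φ / (2 * Real.pi)) ^ ((n : ℝ) / 2) * (1 + g) ^ (-(k : ℝ) / 2) *
        Real.exp (-(φ / 2) *
          (Y ⬝ᵥ (1 - (g / (1 + g)) • (X * (Xᵀ * X)⁻¹ * Xᵀ)).mulVec Y)) := by
  set A := Xᵀ * X
  set t := φ * (1 + g) / (2 * g)
  have hA : A.PosDef := by
    have hinj : Function.Injective X.mulVec := fun v w h ↦
      (mulVec_injective_iff_isUnit.2 hX) (by simp only [A, ← mulVec_mulVec, h])
    simpa [conjTranspose_eq_transpose_of_trivial] using PosDef.conjTranspose_mul_self X hinj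
  have ht : 0 < t := by positivity
  have hintegrand (β : Fin k → ℝ) :
      (φ / (2 * Real.pi)) ^ ((n : ℝ) / 2) *
        Real.exp (-(φ / 2) * ∑ i, (Y i - (X *ᵥ β) i) ^ 2) *
      ((φ / (2 * Real.pi * g)) ^ ((k : ℝ) / 2) * √A.det *
        Real.exp (-(φ / (2 * g)) * (β ⬝ᵥ A *ᵥ β))) =
      (φ / (2 * Real.pi)) ^ ((n : ℝ) / 2) * (φ / (2 * Real.pi * g)) ^ ((k : ℝ) / 2) * √A.det *
        Real.exp (-(φ / 2) * (Y ⬝ᵥ Y)) *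
        Real.exp (-(β ⬝ᵥ (t • A) *ᵥ β) + 2 * (β ⬝ᵥ (φ / 2) • (Xᵀ *ᵥ Y))) := by
    rw [mul_mul_mul_comm, ← Real.exp_add, gprior_exponent_eq X Y β hg.ne' φ, Real.exp_add]
    ring
  have hexponent : -(φ / 2) * (Y ⬝ᵥ (1 - (g / (1 + g)) • (X * A⁻¹ * Xᵀ)) *ᵥ Y) =
      -(φ / 2) * (Y ⬝ᵥ Y) + (φ / 2) ^ 2 / t * (Y ⬝ᵥ (X * A⁻¹ * Xᵀ) *ᵥ Y) := by
    rw [sub_mulVec, one_mulVec, smul_mulVec, dotProduct_sub, dotProduct_smul, smul_eq_mul]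
    simp only [t]
    field_simp
    ring
  rw [integral_congr_ae (.of_forall hintegrand), integral_const_mul,
    (hA.smul ht).integral_exp_neg_dotProduct_mulVec_add,
    smul_transpose_mulVec_dotProduct_inv_smul_mulVec X ((isUnit_iff_isUnit_det A).1 hA.isUnit) Y _
      ht.ne', det_smul, Fintype.card_fin, ← gprior_normalizing_constant k hg hφ hA.det_pos,
    hexponent, Real.exp_add]
  ring

/-- The β-integration step of the marginal likelihood under the g-prior: integrating
the Gaussian likelihood of `Y` against the g-prior density of `β` given the precision
`φ` yields the density of `N(0, (I_n + gP)/φ)` at `Y`, where `P = X(XᵀX)⁻¹Xᵀ` and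
`(I_n + gP)⁻¹ = I_n − (g/(1+g))P`, `det(I_n + gP) = (1+g)^k`. -/
theorem gprior_beta_integral {n k : ℕ} (hk : 1 ≤ k)
    (X : Matrix (Fin n) (Fin k) ℝ) (hX : IsUnit (Xᵀ * X))
    (Y : Fin n → ℝ) (g φ : ℝ) (hg : 0 < g) (hφ : 0 < φ) :
    (∫ β : Fin k → ℝ,
      (φ / (2 * Real.pi)) ^ ((n : ℝ) / 2) *
        Real.exp (-(φ / 2) * ∑ i, (Y i - (X.mulVec β) i) ^ 2) *
      ((φ / (2 * Real.pi * g)) ^ ((k : ℝ) / 2) * Real.sqrt (Xᵀ * X).det *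
        Real.exp (-(φ / (2 * g)) * (β ⬝ᵥ (Xᵀ * X).mulVec β))))
    = (φ / (2 * Real.pi)) ^ ((n : ℝ) / 2) * (1 + g) ^ (-(k : ℝ) / 2) *
        Real.exp (-(φ / 2) *
          (Y ⬝ᵥ (1 - (g / (1 + g)) • (X * (Xᵀ * X)⁻¹ * Xᵀ)).mulVec Y)) :=
  gprior_beta_integral_general X hX Y g φ hg hφ
end
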